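/- arXiv:1303.6449 — 2 statements merged into one kernel-verified Lean document; each statement's English description precedes it below -/
import Mathlib

section
/- Let Φ: (0,∞) → (0,∞) be increasing and satisfy Φ(2r) ≤ 4Φ(r) for all r > 0. Then for any open set U ⊆ ℝ^d, any x, y ∈ U with x ≠ y, and any r ∈ (0,1]: (1/2)·min(1, r²·√(Φ(δ_U(x))·Φ(δ_U(y)))/Φ(|x−y|)) ≤ min(1, r·√(Φ(δ_U(x))/Φ(|x−y|)))·min(1, r·√(Φ(δ_U(y))/Φ(|x−y|))) ≤ min(1, r²·√(Φ(δ_U(x))·Φ(δ_U(y)))/Φ(|x−y|)), where δ_U(z) denotes the Euclidean distance from z to the complement of U. -/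
/-- Arithmetic core lemma. -/
lemma stmt_3_key (a b : ℝ) (ha : 0 ≤ a) (hb : 0 ≤ b)
    (h1 : b ≤ 2 * max a 1) (h2 : a ≤ 2 * max b 1) :
    (1 / 2) * min 1 (a * b) ≤ min 1 a * min 1 b ∧
      min 1 a * min 1 b ≤ min 1 (a * b) := by
  constructor
  · rcases le_or_gt a 1 with hA | hA <;> rcases le_or_gt b 1 with hB | hB
    · rw [min_eq_right hA, min_eq_right hB]
      have : min 1 (a * b) ≤ a * b := min_le_right _ _
      nlinarith [mul_nonneg ha hb]
    · rw [min_eq_right hA, min_eq_left hB.le]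
      have hmax : max a 1 = 1 := max_eq_right hA
      rw [hmax] at h1
      have : min 1 (a * b) ≤ a * b := min_le_right _ _
      nlinarith
    · rw [min_eq_left hA.le, min_eq_right hB]
      have hmax : max b 1 = 1 := max_eq_right hB
      rw [hmax] at h2
      have : min 1 (a * b) ≤ a * b := min_le_right _ _
      nlinarith
    · rw [min_eq_left hA.le, min_eq_left hB.le]
      have : min 1 (a * b) ≤ 1 := min_le_left _ _
      nlinarith
  · apply le_min
    · calc min 1 a * min 1 b ≤ 1 * 1 := by
            exact mul_le_mul (min_le_left _ _) (min_le_left _ _)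
              (le_min zero_le_one hb) zero_le_one
        _ = 1 := one_mul 1
    · exact mul_le_mul (min_le_right _ _) (min_le_right _ _)
        (le_min zero_le_one hb) ha

/-- For an increasing doubling function `Φ` and an open set `U ⊆ ℝ^d`, the two-sided
comparison between the product of two boundary factors and the combined factor. -/
theorem stmt_3 (d : ℕ) (Φ : ℝ → ℝ)
    (hΦpos : ∀ r > (0 : ℝ), 0 < Φ r)
    (hΦmono : ∀ x y : ℝ, 0 < x → x ≤ y → Φ x ≤ Φ y)
    (hΦdbl : ∀ r > (0 : ℝ), Φ (2 * r) ≤ 4 * Φ r)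
    (U : Set (EuclideanSpace ℝ (Fin d))) (hU : IsOpen U) (hUc : Uᶜ.Nonempty)
    (x y : EuclideanSpace ℝ (Fin d)) (hx : x ∈ U) (hy : y ∈ U) (hxy : x ≠ y)
    (r : ℝ) (hr : r ∈ Set.Ioc (0 : ℝ) 1) :
    (1 / 2) * min 1 (r ^ 2 * Real.sqrt (Φ (Metric.infDist x Uᶜ) * Φ (Metric.infDist y Uᶜ))
        / Φ (dist x y))
      ≤ min 1 (r * Real.sqrt (Φ (Metric.infDist x Uᶜ) / Φ (dist x y)))
        * min 1 (r * Real.sqrt (Φ (Metric.infDist y Uᶜ) / Φ (dist x y))) ∧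
    min 1 (r * Real.sqrt (Φ (Metric.infDist x Uᶜ) / Φ (dist x y)))
        * min 1 (r * Real.sqrt (Φ (Metric.infDist y Uᶜ) / Φ (dist x y)))
      ≤ min 1 (r ^ 2 * Real.sqrt (Φ (Metric.infDist x Uᶜ) * Φ (Metric.infDist y Uᶜ))
        / Φ (dist x y)) := by
  obtain ⟨hr0, hr1⟩ := hr
  set δx := Metric.infDist x Uᶜ with hδx
  set δy := Metric.infDist y Uᶜ with hδy
  set t := dist x y with ht
  have ht0 : 0 < t := dist_pos.mpr hxy
  have hδx0 : 0 < δx := by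
    rw [hδx, ← hU.isClosed_compl.notMem_iff_infDist_pos hUc]
    simpa using hx
  have hδy0 : 0 < δy := by
    rw [hδy, ← hU.isClosed_compl.notMem_iff_infDist_pos hUc]
    simpa using hy
  have hA0 : 0 < Φ δx := hΦpos _ hδx0
  have hB0 : 0 < Φ δy := hΦpos _ hδy0
  have hT0 : 0 < Φ t := hΦpos _ ht0
  -- triangle inequality for infDist
  have htri : ∀ u v : EuclideanSpace ℝ (Fin d),
      Metric.infDist u Uᶜ ≤ Metric.infDist v Uᶜ + dist u v := fun u v =>
    Metric.infDist_le_infDist_add_dist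
  -- doubling bound
  have hbound : ∀ u v : EuclideanSpace ℝ (Fin d), u ∈ U → v ∈ U →
      Metric.infDist u Uᶜ ≤ Metric.infDist v Uᶜ + dist u v →
      Φ (Metric.infDist u Uᶜ) ≤ 4 * Φ (Metric.infDist v Uᶜ) ∨
      Φ (Metric.infDist u Uᶜ) ≤ 4 * Φ (dist u v) := by
    intro u v hu hv h
    have hu0 : 0 < Metric.infDist u Uᶜ := by
      rw [← hU.isClosed_compl.notMem_iff_infDist_pos hUc]; simpa using hu
    have hv0 : 0 < Metric.infDist v Uᶜ := by
      rw [← hU.isClosed_compl.notMem_iff_infDist_pos hUc]; simpa using hv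
    rcases le_total (Metric.infDist v Uᶜ) (dist u v) with hc | hc
    · right
      have hd0 : 0 < dist u v := lt_of_lt_of_le hv0 hc
      calc Φ (Metric.infDist u Uᶜ) ≤ Φ (2 * dist u v) := by
            apply hΦmono _ _ hu0; linarith
        _ ≤ 4 * Φ (dist u v) := hΦdbl _ hd0
    · left
      calc Φ (Metric.infDist u Uᶜ) ≤ Φ (2 * Metric.infDist v Uᶜ) := by
            apply hΦmono _ _ hu0; linarith
        _ ≤ 4 * Φ (Metric.infDist v Uᶜ) := hΦdbl _ hv0
  -- set a, b
  set a := r * Real.sqrt (Φ δx / Φ t) with hadef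
  set b := r * Real.sqrt (Φ δy / Φ t) with hbdef
  have ha : 0 ≤ a := mul_nonneg hr0.le (Real.sqrt_nonneg _)
  have hb : 0 ≤ b := mul_nonneg hr0.le (Real.sqrt_nonneg _)
  have hab : a * b = r ^ 2 * Real.sqrt (Φ δx * Φ δy) / Φ t := by
    have hsT : Real.sqrt (Φ t) * Real.sqrt (Φ t) = Φ t := Real.mul_self_sqrt hT0.le
    rw [hadef, hbdef, Real.sqrt_div hA0.le, Real.sqrt_div hB0.le]
    rw [show r * (Real.sqrt (Φ δx) / Real.sqrt (Φ t)) * (r * (Real.sqrt (Φ δy) / Real.sqrt (Φ t)))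
      = r ^ 2 * (Real.sqrt (Φ δx) * Real.sqrt (Φ δy)) / (Real.sqrt (Φ t) * Real.sqrt (Φ t)) by ring,
      hsT, ← Real.sqrt_mul hA0.le]
  -- the comparability bounds
  have hcomp : ∀ u v : EuclideanSpace ℝ (Fin d), u ∈ U → v ∈ U → dist u v = t →
      r * Real.sqrt (Φ (Metric.infDist u Uᶜ) / Φ t) ≤
        2 * max (r * Real.sqrt (Φ (Metric.infDist v Uᶜ) / Φ t)) 1 := by
    intro u v hu hv hd
    rcases hbound u v hu hv (htri u v) with hc | hc
    · have h1 : Φ (Metric.infDist u Uᶜ) / Φ t ≤ 4 * (Φ (Metric.infDist v Uᶜ) / Φ t) := by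
        rw [← mul_div_assoc]
        gcongr
      have h2 : Real.sqrt (Φ (Metric.infDist u Uᶜ) / Φ t) ≤
          2 * Real.sqrt (Φ (Metric.infDist v Uᶜ) / Φ t) := by
        have h3 := Real.sqrt_le_sqrt h1
        rw [Real.sqrt_mul (by norm_num : (0:ℝ) ≤ 4)] at h3
        have h4 : Real.sqrt (4:ℝ) = 2 := by
          rw [show (4:ℝ) = 2^2 by norm_num, Real.sqrt_sq (by norm_num : (0:ℝ) ≤ 2)]
        rwa [h4] at h3
      calc r * Real.sqrt (Φ (Metric.infDist u Uᶜ) / Φ t)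
          ≤ r * (2 * Real.sqrt (Φ (Metric.infDist v Uᶜ) / Φ t)) :=
            mul_le_mul_of_nonneg_left h2 hr0.le
        _ = 2 * (r * Real.sqrt (Φ (Metric.infDist v Uᶜ) / Φ t)) := by ring
        _ ≤ 2 * max (r * Real.sqrt (Φ (Metric.infDist v Uᶜ) / Φ t)) 1 := by
            have := le_max_left (r * Real.sqrt (Φ (Metric.infDist v Uᶜ) / Φ t)) (1:ℝ)
            linarith
    · rw [hd] at hc
      have h1 : Φ (Metric.infDist u Uᶜ) / Φ t ≤ 4 := by
        rw [div_le_iff₀ hT0]; linarith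
      have h2 : Real.sqrt (Φ (Metric.infDist u Uᶜ) / Φ t) ≤ 2 := by
        have h3 := Real.sqrt_le_sqrt h1
        have h4 : Real.sqrt (4:ℝ) = 2 := by
          rw [show (4:ℝ) = 2^2 by norm_num, Real.sqrt_sq (by norm_num : (0:ℝ) ≤ 2)]
        rwa [h4] at h3
      calc r * Real.sqrt (Φ (Metric.infDist u Uᶜ) / Φ t) ≤ r * 2 :=
            mul_le_mul_of_nonneg_left h2 hr0.le
        _ ≤ 2 * 1 := by linarith
        _ ≤ 2 * max (r * Real.sqrt (Φ (Metric.infDist v Uᶜ) / Φ t)) 1 := by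
            have := le_max_right (r * Real.sqrt (Φ (Metric.infDist v Uᶜ) / Φ t)) (1:ℝ)
            linarith
  have h1 : b ≤ 2 * max a 1 := hcomp y x hy hx (dist_comm y x)
  have h2 : a ≤ 2 * max b 1 := hcomp x y hx hy ht.symm
  have := stmt_3_key a b ha hb h1 h2
  rw [hab] at this
  exact this
end

section
/- Let Φ: (0,∞) → (0,∞) be a strictly increasing continuous bijection with doubling property Φ(2r) ≤ 4Φ(r), and suppose additionally (condition (A)-derived scaling) that for every T > 0 there is C_T > 1 with C_T^{-1}(r/R)^{1/(2δ₁)} ≤ Φ^{-1}(r)/Φ^{-1}(R) ≤ C_T(r/R)^{1/(2δ₂)} for 0 < r ≤ R ≤ T, where 0 < δ₁ ≤ δ₂ < 1. Fix T > 0 and define h_T(a,r) = a + Φ(r)·∫_{Φ(r)/T}^1 min(1, ua/Φ(r))·[u²·Φ^{-1}(u^{-1}Φ(r))]^{-1} du + (Φ(r)/r)·min(1, a/Φ(r)). Then there exists c > 1 such that for all 0 < a < Φ(r) ≤ T/2: c^{-1}·(a/r) ≤ h_T(a,r) ≤ c·(a/r). -/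
set_option maxHeartbeats 1000000


/-- Lemma 7.2 of Chen–Kim–Song, case `a < Φ(r)`: the function `h_T(a,r)` is comparable
to `a/r` when `0 < a < Φ(r) ≤ T/2`. -/
theorem stmt_8 (Φ Φinv : ℝ → ℝ) (δ₁ δ₂ T : ℝ)
    (hδ₁ : 0 < δ₁) (hδ₁₂ : δ₁ ≤ δ₂) (hδ₂ : δ₂ < 1) (hT : 0 < T)
    (hΦpos : ∀ r > (0 : ℝ), 0 < Φ r)
    (hΦmono : StrictMonoOn Φ (Set.Ioi (0 : ℝ)))
    (hΦcont : ContinuousOn Φ (Set.Ioi (0 : ℝ)))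
    (hΦdbl : ∀ r > (0 : ℝ), Φ (2 * r) ≤ 4 * Φ r)
    (hinv_pos : ∀ s > (0 : ℝ), 0 < Φinv s)
    (hinv_right : ∀ s > (0 : ℝ), Φ (Φinv s) = s)
    (hinv_left : ∀ r > (0 : ℝ), Φinv (Φ r) = r)
    (hscale : ∀ T' > (0 : ℝ), ∃ C > (1 : ℝ), ∀ r R : ℝ, 0 < r → r ≤ R → R ≤ T' →
      C⁻¹ * (r / R) ^ (1 / (2 * δ₁)) ≤ Φinv r / Φinv R ∧
      Φinv r / Φinv R ≤ C * (r / R) ^ (1 / (2 * δ₂))) :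
    ∃ c > (1 : ℝ), ∀ a r : ℝ, 0 < a → 0 < r → a < Φ r → Φ r ≤ T / 2 →
      c⁻¹ * (a / r)
        ≤ a + Φ r * (∫ u in (Φ r / T)..1,
            min 1 (u * a / Φ r) * (u ^ 2 * Φinv (u⁻¹ * Φ r))⁻¹)
          + (Φ r / r) * min 1 (a / Φ r) ∧
      a + Φ r * (∫ u in (Φ r / T)..1,
            min 1 (u * a / Φ r) * (u ^ 2 * Φinv (u⁻¹ * Φ r))⁻¹)
          + (Φ r / r) * min 1 (a / Φ r)
        ≤ c * (a / r) := by
  obtain ⟨C, hC1, hCprop⟩ := hscale T hT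
  have hC0 : (0:ℝ) < C := lt_trans one_pos hC1
  have hinvT : 0 < Φinv T := hinv_pos T hT
  have hδ₂0 : 0 < δ₂ := lt_of_lt_of_le hδ₁ hδ₁₂
  set β : ℝ := 1 / (2 * δ₂) with hβ
  have hβpos : 0 < β := by positivity
  have hβinv : 1 / β ≤ 2 := by
    rw [hβ, one_div_one_div]; nlinarith
  have hinvMono : ∀ s t : ℝ, 0 < s → s ≤ t → Φinv s ≤ Φinv t := by
    intro s t hs hst
    by_contra h
    push_neg at h
    have ht : 0 < t := lt_of_lt_of_le hs hst
    have h1 : Φ (Φinv t) < Φ (Φinv s) := hΦmono (hinv_pos t ht) (hinv_pos s hs) h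
    rw [hinv_right s hs, hinv_right t ht] at h1
    linarith
  refine ⟨C * Φinv T + 2 * C + 1, by nlinarith, ?_⟩
  intro a r ha hr haΦ hΦT
  have hΦr : 0 < Φ r := hΦpos r hr
  have hΦrT : Φ r ≤ T := le_trans hΦT (by linarith)
  set lo := Φ r / T with hlo
  have hlo0 : 0 < lo := by positivity
  have hlo1 : lo ≤ 1 := by rw [hlo, div_le_one hT]; linarith
  -- bound on r
  have hrbound : r ≤ C * Φinv T := by
    obtain ⟨_, h2⟩ := hCprop (Φ r) T hΦr hΦrT le_rfl
    rw [hinv_left r hr] at h2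
    have hpow : (Φ r / T) ^ β ≤ 1 :=
      Real.rpow_le_one (by positivity) (by rw [div_le_one hT]; linarith) (le_of_lt hβpos)
    have h3 : r / Φinv T ≤ C := le_trans h2 (by nlinarith)
    calc r = (r / Φinv T) * Φinv T := by field_simp
    _ ≤ C * Φinv T := by nlinarith
  -- pointwise bound on the integrand
  have key : ∀ u ∈ Set.Icc lo 1,
      min 1 (u * a / Φ r) * (u ^ 2 * Φinv (u⁻¹ * Φ r))⁻¹
        ≤ (C * a / (r * Φ r)) * u ^ (β - 1) := by
    intro u hu
    have hu0 : 0 < u := lt_of_lt_of_le hlo0 hu.1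
    have hu0' : u ≠ 0 := hu0.ne'
    have hXpos : 0 < Φinv (u⁻¹ * Φ r) := hinv_pos _ (by positivity)
    have hle1 : Φ r ≤ u⁻¹ * Φ r := by
      have h1 : u * (u⁻¹ * Φ r) = Φ r := by field_simp
      nlinarith [mul_le_mul_of_nonneg_right hu.2
        (le_of_lt (mul_pos (inv_pos.mpr hu0) hΦr))]
    have hleT : u⁻¹ * Φ r ≤ T := by
      rw [inv_mul_le_iff₀ hu0]
      have : lo * T ≤ u * T := by nlinarith [hu.1]
      have hloT : lo * T = Φ r := by rw [hlo]; field_simp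
      linarith
    obtain ⟨_, h2⟩ := hCprop (Φ r) (u⁻¹ * Φ r) hΦr hle1 hleT
    rw [hinv_left r hr] at h2
    have hratio : Φ r / (u⁻¹ * Φ r) = u := by field_simp
    rw [hratio] at h2
    have hmin : min 1 (u * a / Φ r) = u * a / Φ r := by
      apply min_eq_right
      rw [div_le_one hΦr]
      nlinarith [hu.2]
    rw [hmin]
    have hXinv : (Φinv (u⁻¹ * Φ r))⁻¹ ≤ C * u ^ β / r := by
      rw [le_div_iff₀ hr]
      have h4 : r / Φinv (u⁻¹ * Φ r) = (Φinv (u⁻¹ * Φ r))⁻¹ * r := by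
        rw [div_eq_mul_inv, mul_comm]
      rw [h4] at h2
      exact h2
    set X := Φinv (u⁻¹ * Φ r) with hXdef
    calc u * a / Φ r * (u ^ 2 * X)⁻¹
        = (a / (Φ r * u)) * X⁻¹ := by
          field_simp [hu0', hΦr.ne', hXpos.ne']
    _ ≤ (a / (Φ r * u)) * (C * u ^ β / r) :=
        mul_le_mul_of_nonneg_left hXinv (by positivity)
    _ = C * a / (r * Φ r) * u ^ (β - 1) := by
        rw [Real.rpow_sub hu0, Real.rpow_one]
        field_simp [hu0', hΦr.ne', hXpos.ne', hr.ne']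
  -- nonnegativity of the integrand
  have hnn : ∀ u ∈ Set.Icc lo 1,
      (0:ℝ) ≤ min 1 (u * a / Φ r) * (u ^ 2 * Φinv (u⁻¹ * Φ r))⁻¹ := by
    intro u hu
    have hu0 : 0 < u := lt_of_lt_of_le hlo0 hu.1
    have hXpos : 0 < Φinv (u⁻¹ * Φ r) := hinv_pos _ (by positivity)
    have h1 : (0:ℝ) ≤ min 1 (u * a / Φ r) := le_min one_pos.le (by positivity)
    positivity
  -- integrability of the integrand
  have hintf : IntervalIntegrable
      (fun u => min 1 (u * a / Φ r) * (u ^ 2 * Φinv (u⁻¹ * Φ r))⁻¹)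
      MeasureTheory.volume lo 1 := by
    have heq : (fun u => min 1 (u * a / Φ r) * (u ^ 2 * Φinv (u⁻¹ * Φ r))⁻¹)
        = fun u => (min 1 (u * a / Φ r) * (u ^ 2)⁻¹) * (Φinv (u⁻¹ * Φ r))⁻¹ := by
      funext u; rw [mul_inv]; ring
    rw [heq]
    apply IntervalIntegrable.continuousOn_mul
    · apply MonotoneOn.intervalIntegrable
      rw [Set.uIcc_of_le hlo1]
      intro x hx y hy hxy
      have hx0 : 0 < x := lt_of_lt_of_le hlo0 hx.1
      have hy0 : 0 < y := lt_of_lt_of_le hlo0 hy.1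
      have h1 : y⁻¹ * Φ r ≤ x⁻¹ * Φ r := by
        have : y⁻¹ ≤ x⁻¹ := inv_anti₀ hx0 hxy
        nlinarith
      have h2 : Φinv (y⁻¹ * Φ r) ≤ Φinv (x⁻¹ * Φ r) :=
        hinvMono _ _ (by positivity) h1
      have h3 : 0 < Φinv (y⁻¹ * Φ r) := hinv_pos _ (by positivity)
      exact inv_anti₀ h3 h2
    · rw [Set.uIcc_of_le hlo1]
      apply ContinuousOn.mul
      · exact (continuous_const.min
          ((continuous_id.mul continuous_const).div_const (Φ r))).continuousOn
      · apply ContinuousOn.inv₀ (by fun_prop)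
        intro x hx
        have hx0 : 0 < x := lt_of_lt_of_le hlo0 hx.1
        positivity
  -- integrability of the majorant
  have hintg : IntervalIntegrable
      (fun u => (C * a / (r * Φ r)) * u ^ (β - 1)) MeasureTheory.volume lo 1 := by
    apply ContinuousOn.intervalIntegrable
    apply ContinuousOn.mul continuousOn_const
    apply ContinuousOn.rpow_const continuousOn_id
    intro x hx
    rw [Set.uIcc_of_le hlo1] at hx
    exact Or.inl (lt_of_lt_of_le hlo0 hx.1).ne'
  -- computation of the majorant integral
  have hIg : ∫ u in lo..1, (C * a / (r * Φ r)) * u ^ (β - 1)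
      = (C * a / (r * Φ r)) * ((1 - lo ^ β) / β) := by
    rw [intervalIntegral.integral_const_mul,
      integral_rpow (Or.inl (by linarith))]
    have h5 : β - 1 + 1 = β := by ring
    rw [h5, Real.one_rpow]
  have hImono : (∫ u in lo..1,
        min 1 (u * a / Φ r) * (u ^ 2 * Φinv (u⁻¹ * Φ r))⁻¹)
      ≤ (C * a / (r * Φ r)) * ((1 - lo ^ β) / β) := by
    rw [← hIg]
    exact intervalIntegral.integral_mono_on hlo1 hintf hintg key
  have hInn : (0:ℝ) ≤ ∫ u in lo..1,
      min 1 (u * a / Φ r) * (u ^ 2 * Φinv (u⁻¹ * Φ r))⁻¹ :=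
    intervalIntegral.integral_nonneg hlo1 hnn
  -- bound on the middle term
  have hmid : Φ r * (∫ u in lo..1,
        min 1 (u * a / Φ r) * (u ^ 2 * Φinv (u⁻¹ * Φ r))⁻¹)
      ≤ 2 * C * (a / r) := by
    have h6 : (1 - lo ^ β) / β ≤ 2 := by
      have hlonn : (0:ℝ) ≤ lo ^ β := Real.rpow_nonneg hlo0.le β
      rw [div_le_iff₀ hβpos]
      have h2β : 1 ≤ 2 * β := by
        have hb : 2 * β = 1 / δ₂ := by rw [hβ]; field_simp
        rw [hb, le_div_iff₀ hδ₂0]; linarith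
      linarith
    have h7 : (C * a / (r * Φ r)) * ((1 - lo ^ β) / β) ≤ (C * a / (r * Φ r)) * 2 :=
      mul_le_mul_of_nonneg_left h6 (by positivity)
    have h8 : Φ r * ((C * a / (r * Φ r)) * 2) = 2 * C * (a / r) := by
      field_simp
    nlinarith [hImono, hΦr]
  -- last term
  have hminr : min 1 (a / Φ r) = a / Φ r :=
    min_eq_right (by rw [div_le_one hΦr]; linarith)
  have hlast : (Φ r / r) * min 1 (a / Φ r) = a / r := by
    rw [hminr]; field_simp
  constructor
  · -- lower bound
    have hcinv : (C * Φinv T + 2 * C + 1)⁻¹ ≤ 1 := by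
      have h1 : (1:ℝ) ≤ C * Φinv T + 2 * C + 1 := by nlinarith
      calc (C * Φinv T + 2 * C + 1)⁻¹ ≤ 1⁻¹ := inv_anti₀ one_pos h1
      _ = 1 := inv_one
    have har : 0 < a / r := by positivity
    have h9 : (C * Φinv T + 2 * C + 1)⁻¹ * (a / r) ≤ a / r := by
      nlinarith
    rw [hlast]
    have h10 : 0 ≤ Φ r * ∫ u in Φ r / T..1,
        min 1 (u * a / Φ r) * (u ^ 2 * Φinv (u⁻¹ * Φ r))⁻¹ := by
      rw [← hlo]; positivity
    rw [← hlo] at *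
    linarith
  · -- upper bound
    rw [hlast]
    have hab : a ≤ (a / r) * (C * Φinv T) := by
      have h1 : a / r * r = a := by field_simp
      have h2 := mul_le_mul_of_nonneg_left hrbound (le_of_lt (div_pos ha hr))
      linarith
    rw [← hlo] at *
    nlinarith [hmid, hab]
end
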